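/- arXiv:2302.09203 — 4 statements merged into one kernel-verified Lean document; each statement's English description precedes it below -/
import Mathlib

section
/- Stationarity of the discrete upwind flux implies concentration at the zero of the drift: suppose g_k = r(L* - z_k) with z_k = kΔz, r > 0, and L* = k₀Δz for some k₀ ∈ {0,…,N_z}. Let nonnegative ρ_k (k = 0,…,N_z, with ghost values ρ_{-1} = ρ_{N_z+1} = 0) satisfy J_{k+1/2} = J_{k-1/2} for all k where J_{k+1/2} = g_k⁺·ρ_k - g_{k+1}⁻·ρ_{k+1} and zero boundary fluxes. Then ρ_k = 0 for all k ≠ k₀. -/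
/-!
Stationarity together with the zero flux at the left boundary forces every interface flux to
vanish. Since the drift is positive left of `k₀` and negative right of it, the upwind flux
through the interface on the side of a cell facing away from `k₀` only carries mass out of
that cell, so a vanishing flux there means the cell is empty.
-/

theorem Int.eq_zero_of_stationary {M : Type*} [Zero M] {J : ℤ → M} {a b : ℤ} (ha : J a = 0)
    (hstat : ∀ k, a < k → k ≤ b → J k = J (k - 1)) : ∀ k, a ≤ k → k ≤ b → J k = 0 := by
  intro k hak
  induction k, hak using Int.leInduction with
  | base => exact fun _ => ha
  | succ k hak ih =>
    intro hkb
    rw [hstat (k + 1) (by omega) hkb, add_sub_cancel_right]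
    exact ih (by omega)

section UpwindFlux

variable {α : Type*} [Ring α] [LinearOrder α] [IsStrictOrderedRing α]

/-- The flux `J_{k+1/2}` between cells `k` and `k + 1`. -/
def upwindFlux (g ρ : ℤ → α) (k : ℤ) : α :=
  max (g k) 0 * ρ k - max (-(g (k + 1))) 0 * ρ (k + 1)

variable {g ρ : ℤ → α} {k₀ k : ℤ}

theorem eq_zero_of_upwindFlux_eq_zero_of_lt (hg : StrictAnti g) (hg₀ : g k₀ = 0) (hk : k < k₀)
    (hJ : upwindFlux g ρ k = 0) : ρ k = 0 := by
  have hgk : 0 < g k := hg₀ ▸ hg hk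
  have hgk₁ : 0 ≤ g (k + 1) := hg₀ ▸ hg.antitone (by omega)
  rw [upwindFlux, max_eq_left hgk.le, max_eq_right (neg_nonpos.mpr hgk₁), zero_mul, sub_zero]
    at hJ
  exact (mul_eq_zero.mp hJ).resolve_left hgk.ne'

theorem eq_zero_of_upwindFlux_eq_zero_of_gt (hg : StrictAnti g) (hg₀ : g k₀ = 0) (hk : k₀ < k)
    (hJ : upwindFlux g ρ (k - 1) = 0) : ρ k = 0 := by
  have hgk : g k < 0 := hg₀ ▸ hg hk
  have hgk₁ : g (k - 1) ≤ 0 := hg₀ ▸ hg.antitone (by omega)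
  rw [upwindFlux, sub_add_cancel, max_eq_right hgk₁, max_eq_left (neg_nonneg.mpr hgk.le),
    zero_mul, zero_sub, neg_eq_zero] at hJ
  exact (mul_eq_zero.mp hJ).resolve_left (neg_ne_zero.mpr hgk.ne)

end UpwindFlux

theorem stmt_7_general (Nz k₀ : ℕ) (hk₀ : k₀ ≤ Nz) (Δz r : ℝ) (hΔz : 0 < Δz) (hr : 0 < r)
    (g : ℤ → ℝ) (hg : ∀ k : ℤ, g k = r * (((k₀ : ℤ) : ℝ) - (k : ℝ)) * Δz)
    (ρ : ℤ → ℝ)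
    (J : ℤ → ℝ)
    (hJ : ∀ k : ℤ, 0 ≤ k → k ≤ (Nz : ℤ) - 1 →
      J k = max (g k) 0 * ρ k - max (-(g (k + 1))) 0 * ρ (k + 1))
    (hJL : J (-1) = 0)
    (hstat : ∀ k : ℤ, 0 ≤ k → k ≤ (Nz : ℤ) → J k = J (k - 1)) :
    ∀ k : ℤ, 0 ≤ k → k ≤ (Nz : ℤ) → k ≠ (k₀ : ℤ) → ρ k = 0 := by
  have hanti : StrictAnti g := fun a b hab => by
    rw [hg, hg]
    gcongr
  have hg₀ : g k₀ = 0 := by rw [hg, sub_self, mul_zero, zero_mul]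
  have hJ₀ := Int.eq_zero_of_stationary hJL fun k hk hkN => hstat k (by omega) hkN
  have hflux : ∀ k, 0 ≤ k → k ≤ (Nz : ℤ) - 1 → upwindFlux g ρ k = 0 := fun k hk hkN =>
    (hJ k hk hkN).symm.trans (hJ₀ k (by omega) (by omega))
  intro k hk hkN hkk₀
  rcases hkk₀.lt_or_gt with hlt | hgt
  · exact eq_zero_of_upwindFlux_eq_zero_of_lt hanti hg₀ hlt (hflux k hk (by omega))
  · exact eq_zero_of_upwindFlux_eq_zero_of_gt hanti hg₀ hgt (hflux (k - 1) (by omega) (by omega))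

/-- Stationarity of the discrete upwind flux implies concentration at the zero of
the drift. Here `g k = r (k₀ - k) Δz` (i.e. `g(z_k) = r (L* - z_k)` with
`z_k = kΔz`, `L* = k₀Δz`). `J k` denotes the interface flux `J_{k+1/2}` given by
the upwind formula with `u⁺ = max u 0`, `u⁻ = max (-u) 0`; the boundary fluxes
`J_{-1/2}`, `J_{N_z+1/2}` vanish, the ghost values `ρ_{-1} = ρ_{N_z+1} = 0`, and
the fluxes are stationary: `J_{k+1/2} = J_{k-1/2}` for all `k`. Then `ρ_k = 0`
for every `k ≠ k₀`. -/
theorem stmt_7 (Nz k₀ : ℕ) (hk₀ : k₀ ≤ Nz) (Δz r : ℝ) (hΔz : 0 < Δz) (hr : 0 < r)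
    (g : ℤ → ℝ) (hg : ∀ k : ℤ, g k = r * (((k₀ : ℤ) : ℝ) - (k : ℝ)) * Δz)
    (ρ : ℤ → ℝ)
    (hnn : ∀ k : ℤ, 0 ≤ k → k ≤ (Nz : ℤ) → 0 ≤ ρ k)
    (hghostL : ρ (-1) = 0) (hghostR : ρ ((Nz : ℤ) + 1) = 0)
    (J : ℤ → ℝ)
    (hJ : ∀ k : ℤ, 0 ≤ k → k ≤ (Nz : ℤ) - 1 →
      J k = max (g k) 0 * ρ k - max (-(g (k + 1))) 0 * ρ (k + 1))
    (hJL : J (-1) = 0) (hJR : J (Nz : ℤ) = 0)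
    (hstat : ∀ k : ℤ, 0 ≤ k → k ≤ (Nz : ℤ) → J k = J (k - 1)) :
    ∀ k : ℤ, 0 ≤ k → k ≤ (Nz : ℤ) → k ≠ (k₀ : ℤ) → ρ k = 0 :=
  stmt_7_general Nz k₀ hk₀ Δz r hΔz hr g hg ρ J hJ hJL hstat
end

section
/- Combining conservation and concentration: under the hypotheses of the previous two statements (stationary fluxes, zero boundary fluxes, nonnegative ρ*_k obtained from ρ_k by the conservative upwind update), the limit profile satisfies ρ*_k = (∑_{j=0}^{N_z} ρ_j)·δ_{k=k₀}, i.e., it equals the total initial mass concentrated at the grid point k₀ where the drift vanishes. -/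
/-!
A stationary flux that vanishes at the left wall vanishes at every interface. At a zero
interface the upwind flux carries mass only out of the cell upstream of it, so a cell left of
`k₀` (drift pointing right) must be empty, and likewise a cell right of `k₀`. The update with
stationary fluxes leaves every cell unchanged, so the whole initial mass sits at `k₀`.
-/

theorem stationary_flux_eq_left_boundary {α : Type*} {N : ℤ} {J : ℤ → α}
    (hstat : ∀ k : ℤ, 0 ≤ k → k ≤ N → J k = J (k - 1)) :
    ∀ k : ℤ, -1 ≤ k → k ≤ N → J k = J (-1) := by
  refine Int.leInduction (fun _ ↦ rfl) fun k hk ih hkN ↦ ?_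
  rw [hstat (k + 1) (by omega) hkN, add_sub_cancel_right]
  exact ih (by omega)

section UpwindFlux

variable {𝕜 : Type*} [Field 𝕜] [LinearOrder 𝕜] [IsStrictOrderedRing 𝕜] {a b x y : 𝕜}

theorem upwind_left_eq_zero (ha : 0 < a) (hb : 0 ≤ b)
    (h : max a 0 * x - max (-b) 0 * y = 0) : x = 0 := by
  rw [max_eq_left ha.le, max_eq_right (neg_nonpos.mpr hb), zero_mul, sub_zero] at h
  exact (mul_eq_zero.mp h).resolve_left ha.ne'

theorem upwind_right_eq_zero (ha : a ≤ 0) (hb : b < 0)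
    (h : max a 0 * x - max (-b) 0 * y = 0) : y = 0 := by
  rw [max_eq_right ha, max_eq_left (neg_nonneg.mpr hb.le), zero_mul, zero_sub, neg_eq_zero] at h
  exact (mul_eq_zero.mp h).resolve_left (neg_ne_zero.mpr hb.ne)

end UpwindFlux

section LinearDrift

variable {r Δz : ℝ} {k k₀ : ℤ}

theorem linearDrift_pos (hr : 0 < r) (hΔz : 0 < Δz) (h : k < k₀) :
    0 < r * ((k₀ : ℝ) - k) * Δz :=
  mul_pos (mul_pos hr (sub_pos.mpr (Int.cast_lt.mpr h))) hΔz

theorem linearDrift_nonneg (hr : 0 < r) (hΔz : 0 < Δz) (h : k ≤ k₀) :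
    0 ≤ r * ((k₀ : ℝ) - k) * Δz :=
  mul_nonneg (mul_nonneg hr.le (sub_nonneg.mpr (Int.cast_le.mpr h))) hΔz.le

theorem linearDrift_neg (hr : 0 < r) (hΔz : 0 < Δz) (h : k₀ < k) :
    r * ((k₀ : ℝ) - k) * Δz < 0 :=
  mul_neg_of_neg_of_pos (mul_neg_of_pos_of_neg hr (sub_neg.mpr (Int.cast_lt.mpr h))) hΔz

theorem linearDrift_nonpos (hr : 0 < r) (hΔz : 0 < Δz) (h : k₀ ≤ k) :
    r * ((k₀ : ℝ) - k) * Δz ≤ 0 :=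
  mul_nonpos_of_nonpos_of_nonneg
    (mul_nonpos_of_nonneg_of_nonpos hr.le (sub_nonpos.mpr (Int.cast_le.mpr h))) hΔz.le

end LinearDrift

theorem upwind_eq_zero_of_flux_eq_zero {N k₀ : ℕ} (hk₀ : k₀ ≤ N) {r Δz : ℝ}
    (hr : 0 < r) (hΔz : 0 < Δz) {g : ℤ → ℝ}
    (hg : ∀ k : ℤ, g k = r * (((k₀ : ℤ) : ℝ) - (k : ℝ)) * Δz) {ρs J : ℤ → ℝ}
    (hJ : ∀ k : ℤ, 0 ≤ k → k ≤ (N : ℤ) - 1 →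
      J k = max (g k) 0 * ρs k - max (-(g (k + 1))) 0 * ρs (k + 1))
    (hJ0 : ∀ k : ℤ, 0 ≤ k → k ≤ (N : ℤ) → J k = 0)
    {k : ℤ} (hk : 0 ≤ k) (hkN : k ≤ (N : ℤ)) (hne : k ≠ (k₀ : ℤ)) : ρs k = 0 := by
  rcases hne.lt_or_gt with hlt | hgt
  · refine upwind_left_eq_zero (a := g k) (b := g (k + 1)) (y := ρs (k + 1)) ?_ ?_ ?_
    · exact hg k ▸ linearDrift_pos hr hΔz hlt
    · exact hg (k + 1) ▸ linearDrift_nonneg hr hΔz hlt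
    · rw [← hJ k hk (by omega), hJ0 k hk hkN]
  · refine upwind_right_eq_zero (a := g (k - 1)) (b := g k) (x := ρs (k - 1)) ?_ ?_ ?_
    · exact hg (k - 1) ▸ linearDrift_nonpos hr hΔz (by omega)
    · exact hg k ▸ linearDrift_neg hr hΔz hgt
    · have hJk := hJ (k - 1) (by omega) (by omega)
      rw [sub_add_cancel] at hJk
      rw [← hJk, hJ0 (k - 1) (by omega) (by omega)]

/-- `J k` stands for the flux `J*_{k+1/2}` through the interface between cells `k` and `k + 1`. -/
theorem stmt_8_general (Nz k₀ : ℕ) (hk₀ : k₀ ≤ Nz) (Δz Δt κ r : ℝ)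
    (hΔz : 0 < Δz) (hr : 0 < r)
    (g : ℤ → ℝ) (hg : ∀ k : ℤ, g k = r * (((k₀ : ℤ) : ℝ) - (k : ℝ)) * Δz)
    (ρ ρs : ℤ → ℝ)
    (J : ℤ → ℝ)
    (hJ : ∀ k : ℤ, 0 ≤ k → k ≤ (Nz : ℤ) - 1 →
      J k = max (g k) 0 * ρs k - max (-(g (k + 1))) 0 * ρs (k + 1))
    (hJL : J (-1) = 0)
    (hupd : ∀ k : ℤ, 0 ≤ k → k ≤ (Nz : ℤ) →
      ρs k = ρ k - (κ * Δt / Δz) * (J k - J (k - 1)))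
    (hstat : ∀ k : ℤ, 0 ≤ k → k ≤ (Nz : ℤ) → J k = J (k - 1)) :
    ∀ k : ℤ, 0 ≤ k → k ≤ (Nz : ℤ) →
      ρs k = (∑ j ∈ Finset.range (Nz + 1), ρ (j : ℤ)) *
        (if k = (k₀ : ℤ) then 1 else 0) := by
  have hJ0 (k : ℤ) (hk : 0 ≤ k) (hkN : k ≤ Nz) : J k = 0 :=
    hJL ▸ stationary_flux_eq_left_boundary hstat k (by omega) hkN
  have hoff (k : ℤ) := upwind_eq_zero_of_flux_eq_zero (k := k) hk₀ hr hΔz hg hJ hJ0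
  have hconserve (k : ℤ) (hk : 0 ≤ k) (hkN : k ≤ Nz) : ρs k = ρ k := by
    rw [hupd k hk hkN, hstat k hk hkN, sub_self, mul_zero, sub_zero]
  have hmass : ∑ j ∈ Finset.range (Nz + 1), ρ (j : ℤ) = ρs k₀ := by
    rw [Finset.sum_eq_single_of_mem k₀ (Finset.mem_range.mpr (by omega)),
      hconserve k₀ (by omega) (by omega)]
    intro j hj hjk₀
    have hjN := Finset.mem_range.mp hj
    rw [← hconserve j (by omega) (by omega), hoff j (by omega) (by omega) (by exact_mod_cast hjk₀)]
  intro k hk hkN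
  split_ifs with hkk₀
  · rw [hkk₀, hmass, mul_one]
  · rw [hoff k hk hkN hkk₀, mul_zero]

/-- Conservation + concentration (Lemma 3.1): if nonnegative `ρ*` is obtained
from `ρ` by the conservative upwind update with stationary fluxes
(`J*_{k+1/2} = J*_{k-1/2}`), no-flux boundary conditions and zero ghost values,
with drift `g k = r (k₀ - k) Δz` vanishing exactly at index `k₀`, then
`ρ*_k = (∑_{j=0}^{N_z} ρ_j) δ_{k = k₀}`. Here `J k` denotes `J*_{k+1/2}`. -/
theorem stmt_8 (Nz k₀ : ℕ) (hk₀ : k₀ ≤ Nz) (Δz Δt κ r : ℝ)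
    (hΔz : 0 < Δz) (hΔt : 0 < Δt) (hκ : 0 < κ) (hr : 0 < r)
    (g : ℤ → ℝ) (hg : ∀ k : ℤ, g k = r * (((k₀ : ℤ) : ℝ) - (k : ℝ)) * Δz)
    (ρ ρs : ℤ → ℝ)
    (hnn : ∀ k : ℤ, 0 ≤ k → k ≤ (Nz : ℤ) → 0 ≤ ρs k)
    (hghostL : ρs (-1) = 0) (hghostR : ρs ((Nz : ℤ) + 1) = 0)
    (J : ℤ → ℝ)
    (hJ : ∀ k : ℤ, 0 ≤ k → k ≤ (Nz : ℤ) - 1 →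
      J k = max (g k) 0 * ρs k - max (-(g (k + 1))) 0 * ρs (k + 1))
    (hJL : J (-1) = 0) (hJR : J (Nz : ℤ) = 0)
    (hupd : ∀ k : ℤ, 0 ≤ k → k ≤ (Nz : ℤ) →
      ρs k = ρ k - (κ * Δt / Δz) * (J k - J (k - 1)))
    (hstat : ∀ k : ℤ, 0 ≤ k → k ≤ (Nz : ℤ) → J k = J (k - 1)) :
    ∀ k : ℤ, 0 ≤ k → k ≤ (Nz : ℤ) →
      ρs k = (∑ j ∈ Finset.range (Nz + 1), ρ (j : ℤ)) *
        (if k = (k₀ : ℤ) then 1 else 0) :=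
  stmt_8_general Nz k₀ hk₀ Δz Δt κ r hΔz hr g hg ρ ρs J hJ hJL hupd hstat
end

section
/- For the linearized PBDM (k_V = r) around (ρ̄^z, h̄, 0), the characteristic matrix is block lower-triangular enough that its spectrum consists exactly of λ₁ = −K·D(L(h̄)), λ₂ = −K·D(z) + κr − ik₃κr·g̃(z, h̄), λ₃ = −K·D_h − β, λ₄ = −K·D_n − γϱ̄; in particular Re(λ₂) = −K·D(z) + κr > 0 whenever K·D(z) < κr, so the system is unstable for small K. -/
open Matrix Polynomial Finset

namespace Matrix

variable {m α : Type*} [Fintype m] [DecidableEq m] [LinearOrder α] {b : m → α}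

theorem BlockTriangular.det_eq_prod_diag_of_injective {R : Type*} [CommRing R] {M : Matrix m m R}
    (hM : M.BlockTriangular b) (hb : b.Injective) : M.det = ∏ i, M i i := by
  rw [hM.det, prod_image fun i _ j _ h => hb h]
  refine prod_congr rfl fun i _ => ?_
  -- `b` being injective, every diagonal block is `1 × 1`.
  let : Unique {j // b j = b i} := ⟨⟨⟨i, rfl⟩⟩, fun j => Subtype.ext (hb j.2)⟩
  rw [det_unique]
  rfl

theorem BlockTriangular.spectrum_eq_range_diag_of_injective {K : Type*} [Field K]
    {M : Matrix m m K} (hM : M.BlockTriangular b) (hb : b.Injective) :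
    spectrum K M = Set.range M.diag := by
  ext μ
  rw [mem_spectrum_iff_isRoot_charpoly, Matrix.charpoly,
    (charmatrix_blockTriangular_iff.mpr hM).det_eq_prod_diag_of_injective hb]
  simp only [IsRoot.def, eval_prod, charmatrix_apply_eq, eval_sub, eval_X, eval_C, prod_eq_zero_iff,
    mem_univ, true_and, sub_eq_zero, Set.mem_range, diag_apply]
  exact exists_congr fun _ => eq_comm

end Matrix

theorem stmt_18_general (K κ r Dz DL Dh Dn β γ ϱbar ϱθ α k₃ gtilde : ℝ)
    (a12 aI : ℂ) :
    spectrum ℂ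
      (!![((-K * DL : ℝ) : ℂ), a12, 0, ((r * ϱθ : ℝ) : ℂ);
          0, ((-K * Dz + κ * r : ℝ) : ℂ) - Complex.I * (k₃ * κ * r * gtilde : ℝ), 0, 0;
          ((α : ℝ) : ℂ), aI, ((-K * Dh - β : ℝ) : ℂ), 0;
          0, 0, 0, ((-K * Dn - γ * ϱbar : ℝ) : ℂ)] : Matrix (Fin 4) (Fin 4) ℂ)
      = {((-K * DL : ℝ) : ℂ),
         ((-K * Dz + κ * r : ℝ) : ℂ) - Complex.I * (k₃ * κ * r * gtilde : ℝ),
         ((-K * Dh - β : ℝ) : ℂ),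
         ((-K * Dn - γ * ϱbar : ℝ) : ℂ)} ∧
    (K * Dz < κ * r →
      0 < (((-K * Dz + κ * r : ℝ) : ℂ)
            - Complex.I * (k₃ * κ * r * gtilde : ℝ)).re) := by
  refine ⟨?_, fun hsmall => ?_⟩
  · -- Ordering the unknowns as (3, 1, 4, 2) makes the matrix upper triangular.
    rw [BlockTriangular.spectrum_eq_range_diag_of_injective (b := ![1, 3, 0, 2]) ?_ (by decide)]
    · ext μ
      simp [Fin.exists_fin_succ, eq_comm]
    · intro i j hij
      fin_cases i <;> fin_cases j <;> simp_all
  · simp only [Complex.sub_re, Complex.ofReal_re, Complex.mul_re, Complex.I_re, Complex.I_im,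
      Complex.ofReal_im]
    linarith

/-- Spectrum of the characteristic matrix of the linearized PBDM (`k_V = r`) at
`(ρ̄ᶻ, h̄, 0)`: since `a₁₃ = 0` (and `n̄ = 0`), the spectrum consists exactly of
`λ₁ = -K D(L(h̄))`, `λ₂ = -K D(z) + κr - i k₃ κ r g̃(z,h̄)`, `λ₃ = -K D_h - β`,
`λ₄ = -K D_n - γ ϱ̄`; moreover `Re λ₂ = -K D(z) + κ r > 0` whenever
`K D(z) < κ r`, so the system is unstable for small `K`. Here `a12` and `aI`
denote the complex entries `a₁₂` and `α ∫_{Ω_θ} e^{i k₃ z} dz` of the matrix. -/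
theorem stmt_18 (K κ r Dz DL Dh Dn β γ ϱbar ϱθ α k₃ gtilde : ℝ)
    (a12 aI : ℂ)
    (hK : 0 ≤ K) (hκ : 0 < κ) (hr : 0 < r) (hDz : 0 < Dz) (hDL : 0 < DL)
    (hDh : 0 < Dh) (hDn : 0 < Dn) (hβ : 0 < β) (hγ : 0 < γ) (hϱ : 0 < ϱbar) :
    spectrum ℂ
      (!![((-K * DL : ℝ) : ℂ), a12, 0, ((r * ϱθ : ℝ) : ℂ);
          0, ((-K * Dz + κ * r : ℝ) : ℂ) - Complex.I * (k₃ * κ * r * gtilde : ℝ), 0, 0;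
          ((α : ℝ) : ℂ), aI, ((-K * Dh - β : ℝ) : ℂ), 0;
          0, 0, 0, ((-K * Dn - γ * ϱbar : ℝ) : ℂ)] : Matrix (Fin 4) (Fin 4) ℂ)
      = {((-K * DL : ℝ) : ℂ),
         ((-K * Dz + κ * r : ℝ) : ℂ) - Complex.I * (k₃ * κ * r * gtilde : ℝ),
         ((-K * Dh - β : ℝ) : ℂ),
         ((-K * Dn - γ * ϱbar : ℝ) : ℂ)} ∧
    (K * Dz < κ * r →
      0 < (((-K * Dz + κ * r : ℝ) : ℂ)
            - Complex.I * (k₃ * κ * r * gtilde : ℝ)).re) :=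
  stmt_18_general K κ r Dz DL Dh Dn β γ ϱbar ϱθ α k₃ gtilde a12 aI
end

section
/- The ADI discretization of the AHL equation preserves nonnegativity of the implicit step: if h^{m}_{i,j} ≥ 0 for all i, j, ϱ^m_{i,j} ≥ 0, α, β, D_h, Δt, Δx, Δy > 0, then the linear system (I − (Δt/2)D_h δ_xx + (Δt/2)β I) h^{m*} = h^m + (Δt/2)(D_h δ_yy h^m + α ϱ^m) has a unique solution h^{m*}, provided additionally Δt·D_h/Δy² ≤ 1 the right-hand side is nonnegative and hence h^{m*}_{i,j} ≥ 0 for all i, j. -/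
/-- Index of the left neighbor with reflecting (Neumann) boundary. -/
def prevIdx {n : ℕ} (i : Fin n) : Fin n :=
  ⟨i.val - 1, Nat.lt_of_le_of_lt (Nat.sub_le _ _) i.isLt⟩

/-- Index of the right neighbor with reflecting (Neumann) boundary. -/
def nextIdx {n : ℕ} (i : Fin n) : Fin n :=
  ⟨min (i.val + 1) (n - 1), by have := i.isLt; omega⟩

/-- Discrete second difference in `x` with reflecting boundary. -/
noncomputable def dxx {Nx Ny : ℕ} (Δx : ℝ) (u : Fin Nx → Fin Ny → ℝ)
    (i : Fin Nx) (j : Fin Ny) : ℝ :=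
  (u (prevIdx i) j - 2 * u i j + u (nextIdx i) j) / Δx ^ 2

/-- Discrete second difference in `y` with reflecting boundary. -/
noncomputable def dyy {Nx Ny : ℕ} (Δy : ℝ) (u : Fin Nx → Fin Ny → ℝ)
    (i : Fin Nx) (j : Fin Ny) : ℝ :=
  (u i (prevIdx j) - 2 * u i j + u i (nextIdx j)) / Δy ^ 2

/-!
The implicit operator `L u = u - c δ_xx u + b u` with `c, b ≥ 0` satisfies a discrete minimum
principle: at a global minimum of `u` the second difference is nonnegative, so `L u ≥ 0` forces
`(1 + b) min u ≥ 0`. Applied to `±u` this makes `L` injective, hence bijective on the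
finite-dimensional grid space, and shows that its solutions inherit nonnegativity from the
right-hand side. The right-hand side is nonnegative because, under the CFL condition
`Δt D_h / Δy² ≤ 1`, the explicit `y`-step is a convex combination of grid values of `h^m`.
-/

noncomputable def implicitStepX {Nx Ny : ℕ} (c b Δx : ℝ) :
    (Fin Nx → Fin Ny → ℝ) →ₗ[ℝ] (Fin Nx → Fin Ny → ℝ) where
  toFun u i j := u i j - c * dxx Δx u i j + b * u i j
  map_add' u v := by
    funext i j
    simp only [dxx, Pi.add_apply]
    ring
  map_smul' r u := by
    funext i j
    simp only [dxx, Pi.smul_apply, smul_eq_mul, RingHom.id_apply]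
    ring

lemma implicitStepX_eq_iff {Nx Ny : ℕ} (c b Δx : ℝ) (u R : Fin Nx → Fin Ny → ℝ) :
    implicitStepX c b Δx u = R ↔ ∀ i j, u i j - c * dxx Δx u i j + b * u i j = R i j := by
  simp only [funext_iff]
  rfl

lemma dxx_nonneg_of_forall_le {Nx Ny : ℕ} (Δx : ℝ) (u : Fin Nx → Fin Ny → ℝ)
    (i : Fin Nx) (j : Fin Ny) (hmin : ∀ i', u i j ≤ u i' j) : 0 ≤ dxx Δx u i j := by
  have hprev := hmin (prevIdx i)
  have hnext := hmin (nextIdx i)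
  exact div_nonneg (by linarith) (sq_nonneg Δx)

theorem nonneg_of_implicitStepX_nonneg {Nx Ny : ℕ} {c b : ℝ} (Δx : ℝ) (hc : 0 ≤ c)
    (hb : 0 ≤ b) {u : Fin Nx → Fin Ny → ℝ} (hLu : ∀ i j, 0 ≤ implicitStepX c b Δx u i j)
    (i : Fin Nx) (j : Fin Ny) : 0 ≤ u i j := by
  have : Nonempty (Fin Nx × Fin Ny) := ⟨(i, j)⟩
  obtain ⟨⟨i₀, j₀⟩, hmin⟩ := Finite.exists_min fun p : Fin Nx × Fin Ny => u p.1 p.2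
  have hdxx : 0 ≤ dxx Δx u i₀ j₀ := dxx_nonneg_of_forall_le Δx u i₀ j₀ fun i' => hmin (i', j₀)
  have hL₀ : 0 ≤ u i₀ j₀ - c * dxx Δx u i₀ j₀ + b * u i₀ j₀ := hLu i₀ j₀
  have hmin₀ : 0 ≤ u i₀ j₀ := by nlinarith [mul_nonneg hc hdxx]
  exact hmin₀.trans (hmin (i, j))

theorem implicitStepX_injective {Nx Ny : ℕ} {c b : ℝ} (Δx : ℝ) (hc : 0 ≤ c) (hb : 0 ≤ b) :
    Function.Injective (implicitStepX (Nx := Nx) (Ny := Ny) c b Δx) := by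
  rw [injective_iff_map_eq_zero]
  intro u hu
  have hpos := nonneg_of_implicitStepX_nonneg Δx hc hb (u := u) (by simp [hu])
  have hneg := nonneg_of_implicitStepX_nonneg Δx hc hb (u := -u) (by simp [hu])
  funext i j
  exact le_antisymm (by simpa using hneg i j) (hpos i j)

theorem implicitStepX_bijective {Nx Ny : ℕ} {c b : ℝ} (Δx : ℝ) (hc : 0 ≤ c) (hb : 0 ≤ b) :
    Function.Bijective (implicitStepX (Nx := Nx) (Ny := Ny) c b Δx) :=
  let hinj := implicitStepX_injective Δx hc hb
  ⟨hinj, LinearMap.injective_iff_surjective.mp hinj⟩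

lemma add_mul_dyy_nonneg {Nx Ny : ℕ} {c : ℝ} (Δy : ℝ) (hc : 0 ≤ c) (hCFL : 2 * c / Δy ^ 2 ≤ 1)
    {u : Fin Nx → Fin Ny → ℝ} (hu : ∀ i j, 0 ≤ u i j) (i : Fin Nx) (j : Fin Ny) :
    0 ≤ u i j + c * dyy Δy u i j := by
  set k := c / Δy ^ 2
  have hk : 0 ≤ k := div_nonneg hc (sq_nonneg Δy)
  have hconvex : u i j + c * dyy Δy u i j
      = (1 - 2 * k) * u i j + k * (u i (prevIdx j) + u i (nextIdx j)) := by
    simp only [dyy, k, mul_div_assoc']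
    ring
  have hCFL' : 2 * k ≤ 1 := by rwa [mul_div_assoc']
  rw [hconvex]
  have := hu i j
  have := hu i (prevIdx j)
  have := hu i (nextIdx j)
  positivity

theorem stmt_19_general {Nx Ny : ℕ} (Δt Δx Δy Dh α β : ℝ)
    (hΔt : 0 < Δt)
    (hDh : 0 < Dh) (hα : 0 < α) (hβ : 0 < β)
    (hCFL : Δt * Dh / Δy ^ 2 ≤ 1)
    (hm ϱm : Fin Nx → Fin Ny → ℝ)
    (hhm : ∀ i j, 0 ≤ hm i j) (hϱm : ∀ i j, 0 ≤ ϱm i j) :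
    (∃! hs : Fin Nx → Fin Ny → ℝ, ∀ i j,
        hs i j - (Δt / 2) * Dh * dxx Δx hs i j + (Δt / 2) * β * hs i j
          = hm i j + (Δt / 2) * (Dh * dyy Δy hm i j + α * ϱm i j)) ∧
    (∀ hs : Fin Nx → Fin Ny → ℝ,
      (∀ i j, hs i j - (Δt / 2) * Dh * dxx Δx hs i j + (Δt / 2) * β * hs i j
          = hm i j + (Δt / 2) * (Dh * dyy Δy hm i j + α * ϱm i j)) →
      ∀ i j, 0 ≤ hs i j) := by
  have hc : 0 ≤ Δt / 2 * Dh := by positivity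
  have hb : 0 ≤ Δt / 2 * β := by positivity
  have hRHS : ∀ i j, 0 ≤ hm i j + (Δt / 2) * (Dh * dyy Δy hm i j + α * ϱm i j) := by
    intro i j
    have hexplicit := add_mul_dyy_nonneg Δy hc (by convert hCFL using 2; ring) hhm i j
    have hsource : 0 ≤ Δt / 2 * (α * ϱm i j) := by have := hϱm i j; positivity
    linarith
  set R : Fin Nx → Fin Ny → ℝ := fun i j => hm i j + (Δt / 2) * (Dh * dyy Δy hm i j + α * ϱm i j)
  have hsolves (hs : Fin Nx → Fin Ny → ℝ) :=
    implicitStepX_eq_iff (Δt / 2 * Dh) (Δt / 2 * β) Δx hs R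
  refine ⟨?_, fun hs hhs => nonneg_of_implicitStepX_nonneg Δx hc hb ?_⟩
  · simpa only [hsolves] using (implicitStepX_bijective Δx hc hb).existsUnique R
  · rw [(hsolves hs).mpr hhs]
    exact hRHS

/-- The first ADI half-step of the AHL equation preserves nonnegativity:
if `h^m ≥ 0`, `ϱ^m ≥ 0`, all the parameters are positive and `Δt D_h / Δy² ≤ 1`,
then the implicit linear system
`h* - (Δt/2) D_h δ_xx h* + (Δt/2) β h* = h^m + (Δt/2)(D_h δ_yy h^m + α ϱ^m)`
has a unique solution `h*`, and that solution is nonnegative. -/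
theorem stmt_19 {Nx Ny : ℕ} (Δt Δx Δy Dh α β : ℝ)
    (hΔt : 0 < Δt) (hΔx : 0 < Δx) (hΔy : 0 < Δy)
    (hDh : 0 < Dh) (hα : 0 < α) (hβ : 0 < β)
    (hCFL : Δt * Dh / Δy ^ 2 ≤ 1)
    (hm ϱm : Fin Nx → Fin Ny → ℝ)
    (hhm : ∀ i j, 0 ≤ hm i j) (hϱm : ∀ i j, 0 ≤ ϱm i j) :
    (∃! hs : Fin Nx → Fin Ny → ℝ, ∀ i j,
        hs i j - (Δt / 2) * Dh * dxx Δx hs i j + (Δt / 2) * β * hs i j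
          = hm i j + (Δt / 2) * (Dh * dyy Δy hm i j + α * ϱm i j)) ∧
    (∀ hs : Fin Nx → Fin Ny → ℝ,
      (∀ i j, hs i j - (Δt / 2) * Dh * dxx Δx hs i j + (Δt / 2) * β * hs i j
          = hm i j + (Δt / 2) * (Dh * dyy Δy hm i j + α * ϱm i j)) →
      ∀ i j, 0 ≤ hs i j) :=
  stmt_19_general Δt Δx Δy Dh α β hΔt hDh hα hβ hCFL hm ϱm hhm hϱm
end
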